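/- arXiv:1504.04099 — 3 statements merged into one kernel-verified Lean document; each statement's English description precedes it below -/
import Mathlib

section
/- Let n ≥ 1, s ∈ (0,1), λ > 0, and let K be a Lévy kernel on ℝⁿ with K(y) ≥ λ|y|^{−n−2s} for almost every y ≠ 0. Let Ω ⊂ ℝⁿ be a bounded open set. Then there is a constant C, depending only on n, s, λ, and the Lebesgue measure of Ω, such that for every u ∈ L²(ℝⁿ) with u = 0 almost everywhere in ℝⁿ∖Ω one has ∫_Ω u² dx ≤ C ∫_{ℝⁿ} ∫_{ℝⁿ} (u(x) − u(x+y))² K(y) dy dx (where the right-hand side may be infinite, in which case the inequality is trivial). -/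
/-!
If `K ≥ κ > 0` on a ball `B` around the origin with `|B| ≥ |Ω| + 1`, then for each `x` the set
of jumps `y ∈ B` with `x + y ∉ Ω` has measure at least `1` by translation invariance; on it
`u (x + y) = 0`, so the inner integral at `x` is at least `κ u(x)²`. Integrating in `x` gives
`∫ u² ≤ κ⁻¹ ∫∫ (u(x) - u(x+y))² K(y)`, and the lower bound `K(y) ≥ λ|y|^{-n-2s}` provides
`κ = λ R^{-n-2s}` on the ball of radius `R`.
-/

open MeasureTheory Metric Set
open scoped ENNReal

noncomputable section

abbrev Ev (n : ℕ) := EuclideanSpace ℝ (Fin n)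

/-- A Lévy kernel on `ℝⁿ`. -/
def IsLevyKernel {n : ℕ} (K : Ev n → ℝ) : Prop :=
  Measurable K ∧ (∀ y, 0 ≤ K y) ∧ (∀ y, K (-y) = K y) ∧
    Integrable (fun y => min (‖y‖ ^ 2) 1 * K y)

section JumpEnergy

variable {G : Type*} [MeasurableSpace G] [AddGroup G] [MeasurableAdd G]
  (μ : Measure G) [μ.IsAddLeftInvariant]

theorem measure_sub_mul_sq_le_lintegral_jump {B Ω : Set G} (hB : MeasurableSet B)
    (hΩ : MeasurableSet Ω) {κ : ℝ} {u K : G → ℝ} (hK : ∀ᵐ y ∂μ, y ∈ B → κ ≤ K y)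
    (hu : ∀ᵐ x ∂μ, x ∉ Ω → u x = 0) (x : G) :
    (μ B - μ Ω) * ENNReal.ofReal κ * ENNReal.ofReal (u x ^ 2) ≤
      ∫⁻ y, ENNReal.ofReal ((u x - u (x + y)) ^ 2 * K y) ∂μ := by
  set S := B \ (fun y => x + y) ⁻¹' Ω
  have hS : MeasurableSet S := hB.diff (hΩ.preimage (measurable_const_add x))
  have hμS : μ B - μ Ω ≤ μ S := by
    rw [← measure_preimage_add μ x Ω]
    exact le_measure_sdiff
  have hu_shift : ∀ᵐ y ∂μ, x + y ∉ Ω → u (x + y) = 0 :=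
    (measurePreserving_add_left μ x).quasiMeasurePreserving.ae hu
  have hbound : ∀ᵐ y ∂μ.restrict S,
      ENNReal.ofReal (u x ^ 2 * κ) ≤ ENNReal.ofReal ((u x - u (x + y)) ^ 2 * K y) := by
    filter_upwards [ae_restrict_mem hS, ae_restrict_of_ae hu_shift, ae_restrict_of_ae hK]
      with y ⟨hyB, hyΩ⟩ hy_shift hyK
    rw [hy_shift hyΩ, sub_zero]
    exact ENNReal.ofReal_le_ofReal (mul_le_mul_of_nonneg_left (hyK hyB) (sq_nonneg _))
  calc (μ B - μ Ω) * ENNReal.ofReal κ * ENNReal.ofReal (u x ^ 2)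
      = ENNReal.ofReal (u x ^ 2 * κ) * (μ B - μ Ω) := by
        rw [ENNReal.ofReal_mul (sq_nonneg _)]
        ring
    _ ≤ ENNReal.ofReal (u x ^ 2 * κ) * μ S := by gcongr
    _ = ∫⁻ _ in S, ENNReal.ofReal (u x ^ 2 * κ) ∂μ := (setLIntegral_const _ _).symm
    _ ≤ ∫⁻ y in S, ENNReal.ofReal ((u x - u (x + y)) ^ 2 * K y) ∂μ := lintegral_mono_ae hbound
    _ ≤ ∫⁻ y, ENNReal.ofReal ((u x - u (x + y)) ^ 2 * K y) ∂μ := setLIntegral_le_lintegral _ _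

theorem measure_sub_mul_lintegral_sq_le_lintegral_jump {B Ω : Set G} (hB : MeasurableSet B)
    (hΩ : MeasurableSet Ω) {κ : ℝ} {u K : G → ℝ}
    (hK : ∀ᵐ y ∂μ, y ∈ B → κ ≤ K y) (hu : ∀ᵐ x ∂μ, x ∉ Ω → u x = 0) :
    (μ B - μ Ω) * ENNReal.ofReal κ * ∫⁻ x, ENNReal.ofReal (u x ^ 2) ∂μ ≤
      ∫⁻ x, ∫⁻ y, ENNReal.ofReal ((u x - u (x + y)) ^ 2 * K y) ∂μ ∂μ :=
  (lintegral_const_mul_le _ _).trans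
    (lintegral_mono (measure_sub_mul_sq_le_lintegral_jump μ hB hΩ hK hu))

end JumpEnergy

section Balls

variable {E : Type*} [NormedAddCommGroup E] [MeasurableSpace E] (μ : Measure E)

theorem exists_le_measure_ball [NormedSpace ℝ E] [FiniteDimensional ℝ E] [Nontrivial E]
    [BorelSpace E] [μ.IsAddHaarMeasure] (x : E) {m : ℝ≥0∞} (hm : m ≠ ∞) :
    ∃ R > 0, m ≤ μ (ball x R) := by
  have hmono : Monotone fun k : ℕ => ball x ((k : ℝ) + 1) := fun i j hij =>
    ball_subset_ball (by gcongr)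
  have hsup : ⨆ k : ℕ, μ (ball x ((k : ℝ) + 1)) = ∞ := by
    rw [← hmono.measure_iUnion, iUnion_ball_nat_succ, measure_univ_of_isAddLeftInvariant]
  obtain ⟨k, hk⟩ := lt_iSup_iff.mp (hsup ▸ hm.lt_top)
  exact ⟨k + 1, by positivity, hk.le⟩

theorem ae_mem_ball_imp_le_of_rpow_le [NullSingletonClass μ] {K : E → ℝ} {c e : ℝ} (hc : 0 ≤ c)
    (he : e ≤ 0) (hK : ∀ᵐ y ∂μ, y ≠ 0 → c * ‖y‖ ^ e ≤ K y) (R : ℝ) :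
    ∀ᵐ y ∂μ, y ∈ ball 0 R → c * R ^ e ≤ K y := by
  filter_upwards [hK, Measure.ae_ne μ 0] with y hyK hy0 hyR
  have hy_pos : 0 < ‖y‖ := norm_pos_iff.mpr hy0
  have hyR : ‖y‖ ≤ R := (mem_ball_zero_iff.mp hyR).le
  calc c * R ^ e ≤ c * ‖y‖ ^ e :=
        mul_le_mul_of_nonneg_left (Real.rpow_le_rpow_of_nonpos hy_pos hyR he) hc
    _ ≤ K y := hyK hy0

end Balls

/-- fractional Poincaré inequality.  If `K(y) ≥ λ|y|^{-n-2s}` a.e., then for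
some constant `C` depending only on `n`, `s`, `λ` and the measure of `Ω`, every
`u ∈ L²(ℝⁿ)` vanishing a.e. outside the bounded open set `Ω` satisfies
`∫_Ω u² ≤ C ∫∫ (u(x)-u(x+y))² K(y) dy dx` (inequality in `[0,∞]`, so the right-hand side
may be infinite). -/
theorem statement1 (n : ℕ) (hn : 1 ≤ n) (s lam : ℝ) (hs : s ∈ Set.Ioo (0:ℝ) 1)
    (hlam : 0 < lam) (V : ℝ≥0∞) :
    ∃ C : ℝ, 0 < C ∧
      ∀ K : Ev n → ℝ, IsLevyKernel K →
        (∀ᵐ y : Ev n, y ≠ 0 → lam * ‖y‖ ^ (-(n:ℝ) - 2*s) ≤ K y) →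
      ∀ Ω : Set (Ev n), IsOpen Ω → Bornology.IsBounded Ω → volume Ω = V →
      ∀ u : Ev n → ℝ, MemLp u 2 volume → (∀ᵐ x : Ev n, x ∉ Ω → u x = 0) →
        ENNReal.ofReal (∫ x in Ω, (u x) ^ 2) ≤
          ENNReal.ofReal C *
            ∫⁻ x : Ev n, ∫⁻ y : Ev n, ENNReal.ofReal ((u x - u (x + y)) ^ 2 * K y) := by
  have : Nontrivial (Ev n) := by
    have : NeZero n := ⟨by omega⟩
    infer_instance
  rcases eq_or_ne V ∞ with rfl | hV
  · exact ⟨1, one_pos, fun K _ _ Ω _ hΩb hΩV => absurd hΩV hΩb.measure_lt_top.ne⟩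
  obtain ⟨R, hR, hball⟩ :=
    exists_le_measure_ball volume (0 : Ev n) (ENNReal.add_ne_top.2 ⟨hV, ENNReal.one_ne_top⟩)
  set κ := lam * R ^ (-(n : ℝ) - 2 * s)
  have hκ : 0 < κ := by positivity
  refine ⟨κ⁻¹, inv_pos.2 hκ, fun K _ hK Ω hΩ _ hΩV u hu hu0 => ?_⟩
  have hexp : -(n : ℝ) - 2 * s ≤ 0 := by linarith [hs.1, (Nat.cast_nonneg n : (0 : ℝ) ≤ n)]
  have hjump := measure_sub_mul_lintegral_sq_le_lintegral_jump volume measurableSet_ball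
    hΩ.measurableSet (ae_mem_ball_imp_le_of_rpow_le volume hlam.le hexp hK R) hu0
  have hgap : 1 ≤ volume (ball (0 : Ev n) R) - volume Ω :=
    ENNReal.le_sub_of_add_le_left (hΩV ▸ hV) (hΩV ▸ hball)
  calc ENNReal.ofReal (∫ x in Ω, (u x) ^ 2)
      ≤ ∫⁻ x, ENNReal.ofReal (u x ^ 2) :=
        (ofReal_integral_eq_lintegral_ofReal hu.integrable_sq.restrict
          (ae_of_all _ fun x => sq_nonneg _)).le.trans (setLIntegral_le_lintegral _ _)
    _ = ENNReal.ofReal κ⁻¹ * (1 * ENNReal.ofReal κ * ∫⁻ x, ENNReal.ofReal (u x ^ 2)) := by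
        rw [one_mul, ← mul_assoc, ← ENNReal.ofReal_mul (inv_pos.2 hκ).le, inv_mul_cancel₀ hκ.ne',
          ENNReal.ofReal_one, one_mul]
    _ ≤ ENNReal.ofReal κ⁻¹ *
          ∫⁻ x : Ev n, ∫⁻ y : Ev n, ENNReal.ofReal ((u x - u (x + y)) ^ 2 * K y) := by
        gcongr
        exact le_trans (by gcongr) hjump
end
end

section
/- Let K be a Lévy kernel on ℝⁿ with K(y) > 0 for almost every y, let Ω ⊂ ℝⁿ be a bounded open set, f ∈ L^∞(Ω), and let g be a measurable function on ℝⁿ∖Ω. Let u be an energy weak solution of Lu = f in Ω with u = g in ℝⁿ∖Ω. If f ≥ 0 almost everywhere in Ω and g ≥ 0 almost everywhere in ℝⁿ∖Ω, then u ≥ 0 almost everywhere in Ω. -/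
open MeasureTheory Metric Set
open scoped ENNReal

noncomputable section

/-- The region `(ℝⁿ×ℝⁿ) ∖ (Ωᶜ×Ωᶜ)`. -/
def crossRegion {n : ℕ} (Ω : Set (Ev n)) : Set (Ev n × Ev n) := {p | p.1 ∈ Ω ∨ p.2 ∈ Ω}

/-- The energy `E_Ω(φ) = ∬_{(ℝⁿ×ℝⁿ)∖(Ωᶜ×Ωᶜ)} (φ(x)-φ(z))² K(x-z) dx dz`, in `[0,∞]`. -/
def energyE {n : ℕ} (K : Ev n → ℝ) (Ω : Set (Ev n)) (φ : Ev n → ℝ) : ℝ≥0∞ :=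
  ∫⁻ p in crossRegion Ω, ENNReal.ofReal ((φ p.1 - φ p.2) ^ 2 * K (p.1 - p.2))

/-- A test function for `(Ω, K)`: in `L²(ℝⁿ)`, vanishing a.e. outside `Ω`, finite energy. -/
def IsTestFn {n : ℕ} (K : Ev n → ℝ) (Ω : Set (Ev n)) (φ : Ev n → ℝ) : Prop :=
  Measurable φ ∧ MemLp φ 2 volume ∧ (∀ᵐ x : Ev n, x ∉ Ω → φ x = 0) ∧ energyE K Ω φ < ⊤

/-- An energy weak solution of `Lu = f` in `Ω` with `u = g` in `ℝⁿ∖Ω`. -/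
def IsEnergyWeakSol {n : ℕ} (K : Ev n → ℝ) (Ω : Set (Ev n)) (f g : Ev n → ℝ)
    (u : Ev n → ℝ) : Prop :=
  Measurable u ∧ MemLp u 2 (volume.restrict Ω) ∧ (∀ᵐ x : Ev n, x ∉ Ω → u x = g x) ∧
    energyE K Ω u < ⊤ ∧
    ∀ φ : Ev n → ℝ, IsTestFn K Ω φ →
      (1/2 : ℝ) * ∫ p in crossRegion Ω, (u p.1 - u p.2) * (φ p.1 - φ p.2) * K (p.1 - p.2)
        = ∫ x in Ω, f x * φ x

/-! Testing the equation with `u⁻` gives `0 ≤ ∫ f u⁻ = ½ B(u, u⁻) ≤ -½ E_Ω(u⁻)`, because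
`(a - b)(a⁻ - b⁻) ≤ -(a⁻ - b⁻)²` pointwise. So `u⁻` has zero energy; as `K > 0` a.e., `u⁻` is
then a.e. constant along pairs `(x, z)` with `x ∈ Ω`, and taking `z` in the exterior, which has
positive measure since `Ω` is bounded, where `u⁻ = 0` gives `u⁻ = 0` a.e. in `Ω`. -/

section NegPart

variable {α : Type*} [CommRing α] [LinearOrder α] [IsStrictOrderedRing α]

lemma sub_mul_negPart_sub_le (a b : α) : (a - b) * (a⁻ - b⁻) ≤ -(a⁻ - b⁻) ^ 2 := by
  rcases le_total 0 a with ha | ha <;> rcases le_total 0 b with hb | hb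
  · simp [negPart_eq_zero.2 ha, negPart_eq_zero.2 hb]
  · rw [negPart_eq_zero.2 ha, negPart_eq_neg.2 hb]; nlinarith
  · rw [negPart_eq_neg.2 ha, negPart_eq_zero.2 hb]; nlinarith
  · rw [negPart_eq_neg.2 ha, negPart_eq_neg.2 hb]; nlinarith

lemma abs_negPart_sub_negPart_le (a b : α) : |a⁻ - b⁻| ≤ |a - b| := by
  simpa only [negPart_def, neg_sub_neg, abs_sub_comm b a] using abs_max_sub_max_le_abs (-a) (-b) 0

end NegPart

lemma measure_compl_ne_zero_of_isBounded {E : Type*} [NormedAddCommGroup E] [NormedSpace ℝ E]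
    [FiniteDimensional ℝ E] [Nontrivial E] [MeasurableSpace E] [BorelSpace E] (μ : Measure E)
    [μ.IsAddHaarMeasure] {s : Set E} (hs : Bornology.IsBounded s) : μ sᶜ ≠ 0 := by
  intro h
  have := measure_univ_le_add_compl (μ := μ) s
  rw [measure_univ_of_isAddLeftInvariant, h, add_zero, top_le_iff] at this
  exact hs.measure_lt_top.ne this

section EnergyEstimates

variable {n : ℕ} {K : Ev n → ℝ} {Ω : Set (Ev n)}

lemma measurableSet_crossRegion (hΩ : MeasurableSet Ω) : MeasurableSet (crossRegion Ω) :=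
  (hΩ.preimage measurable_fst).union (hΩ.preimage measurable_snd)

lemma energyE_le_energyE_of_abs_sub_le (hK : ∀ y, 0 ≤ K y) {φ u : Ev n → ℝ}
    (h : ∀ x z, |φ x - φ z| ≤ |u x - u z|) : energyE K Ω φ ≤ energyE K Ω u :=
  lintegral_mono fun p => ENNReal.ofReal_le_ofReal <|
    mul_le_mul_of_nonneg_right (sq_le_sq.2 (h p.1 p.2)) (hK _)

lemma integrableOn_of_energyE_lt_top (hKm : Measurable K) (hK : ∀ y, 0 ≤ K y) {u : Ev n → ℝ}
    (hum : Measurable u) (hE : energyE K Ω u < ⊤) :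
    IntegrableOn (fun p : Ev n × Ev n => (u p.1 - u p.2) ^ 2 * K (p.1 - p.2)) (crossRegion Ω) :=
  ⟨by fun_prop, (hasFiniteIntegral_iff_ofReal <| .of_forall fun p =>
    mul_nonneg (sq_nonneg _) (hK _)).2 hE⟩

lemma isTestFn_negPart (hΩ : MeasurableSet Ω) (hK : ∀ y, 0 ≤ K y) {u : Ev n → ℝ}
    (hum : Measurable u) (huL2 : MemLp u 2 (volume.restrict Ω))
    (hu_ext : ∀ᵐ x : Ev n, x ∉ Ω → 0 ≤ u x) (hE : energyE K Ω u < ⊤) :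
    IsTestFn K Ω (fun x => (u x)⁻) := by
  have hφ0 : ∀ᵐ x : Ev n, x ∉ Ω → (u x)⁻ = 0 := by
    filter_upwards [hu_ext] with x hx hxΩ using negPart_eq_zero.2 (hx hxΩ)
  refine ⟨hum.negPart, ?_, hφ0, (energyE_le_energyE_of_abs_sub_le hK fun x z =>
    abs_negPart_sub_negPart_le (u x) (u z)).trans_lt hE⟩
  have hL2Ω : MemLp (fun x => (u x)⁻) 2 (volume.restrict Ω) :=
    huL2.of_le hum.negPart.aestronglyMeasurable <| .of_forall fun x => by
      simpa [Real.norm_eq_abs] using abs_negPart_sub_negPart_le (u x) 0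
  refine ((memLp_indicator_iff_restrict hΩ).2 hL2Ω).ae_eq ?_
  filter_upwards [hφ0] with x hx
  by_cases hxΩ : x ∈ Ω
  · simp [hxΩ]
  · simp [hxΩ, hx hxΩ]

lemma IsEnergyWeakSol.ae_nonneg_of_notMem {f g u : Ev n → ℝ} (hu : IsEnergyWeakSol K Ω f g u)
    (hg : ∀ᵐ x : Ev n, x ∉ Ω → 0 ≤ g x) : ∀ᵐ x : Ev n, x ∉ Ω → 0 ≤ u x := by
  filter_upwards [hu.2.2.1, hg] with x hux hgx hxΩ
  exact hux hxΩ ▸ hgx hxΩ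

theorem IsEnergyWeakSol.energyE_negPart_eq_zero (hKm : Measurable K) (hK : ∀ y, 0 ≤ K y)
    (hΩ : MeasurableSet Ω) {f g u : Ev n → ℝ} (hu : IsEnergyWeakSol K Ω f g u)
    (hf : ∀ᵐ x ∂(volume.restrict Ω), 0 ≤ f x) (hg : ∀ᵐ x : Ev n, x ∉ Ω → 0 ≤ g x) :
    energyE K Ω (fun x => (u x)⁻) = 0 := by
  have hφ := isTestFn_negPart hΩ hK hu.1 hu.2.1 (hu.ae_nonneg_of_notMem hg) hu.2.2.2.1
  obtain ⟨hum, -, -, huE, hweak⟩ := hu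
  have hD := integrableOn_of_energyE_lt_top hKm hK hum huE
  have hC := integrableOn_of_energyE_lt_top hKm hK hφ.1 hφ.2.2.2
  have hB : IntegrableOn
      (fun p : Ev n × Ev n => (u p.1 - u p.2) * ((u p.1)⁻ - (u p.2)⁻) * K (p.1 - p.2))
      (crossRegion Ω) := by
    refine hD.mono' (by fun_prop) (.of_forall fun p => ?_)
    rw [Real.norm_eq_abs, abs_mul, abs_mul, abs_of_nonneg (hK _), sq, ← abs_mul_abs_self]
    exact mul_le_mul_of_nonneg_right (mul_le_mul_of_nonneg_left
      (abs_negPart_sub_negPart_le (u p.1) (u p.2)) (abs_nonneg _)) (hK _)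
  have hBC : ∫ p in crossRegion Ω, (u p.1 - u p.2) * ((u p.1)⁻ - (u p.2)⁻) * K (p.1 - p.2) ≤
      -∫ p in crossRegion Ω, ((u p.1)⁻ - (u p.2)⁻) ^ 2 * K (p.1 - p.2) := by
    rw [← integral_neg]
    refine integral_mono hB hC.neg fun p => ?_
    simpa only [neg_mul] using
      mul_le_mul_of_nonneg_right (sub_mul_negPart_sub_le (u p.1) (u p.2)) (hK (p.1 - p.2))
  have hfφ : 0 ≤ ∫ x in Ω, f x * (u x)⁻ := integral_nonneg_of_ae <| by
    filter_upwards [hf] with x hx using mul_nonneg hx (negPart_nonneg _)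
  have hweak_φ := hweak _ hφ
  rw [energyE, ← ofReal_integral_eq_lintegral_ofReal hC (.of_forall fun p =>
    mul_nonneg (sq_nonneg _) (hK _)), ENNReal.ofReal_eq_zero]
  linarith

lemma ae_eq_zero_of_energyE_eq_zero (hKm : Measurable K) (hKpos : ∀ᵐ y : Ev n, 0 < K y)
    (hΩ : MeasurableSet Ω) (hΩc : volume Ωᶜ ≠ 0) {φ : Ev n → ℝ} (hφm : Measurable φ)
    (hφ0 : ∀ᵐ x : Ev n, x ∉ Ω → φ x = 0) (hE : energyE K Ω φ = 0) :
    ∀ᵐ x : Ev n, x ∈ Ω → φ x = 0 := by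
  rw [energyE, lintegral_eq_zero_iff (by fun_prop), Filter.EventuallyEq,
    ae_restrict_iff' (measurableSet_crossRegion hΩ), Measure.volume_eq_prod] at hE
  have hK2 : ∀ᵐ p : Ev n × Ev n ∂(volume.prod volume), 0 < K (p.1 - p.2) :=
    (quasiMeasurePreserving_sub volume volume).ae hKpos
  have hφ2 : ∀ᵐ p : Ev n × Ev n ∂(volume.prod volume), p.2 ∉ Ω → φ p.2 = 0 :=
    Measure.quasiMeasurePreserving_snd.ae hφ0
  filter_upwards [Measure.ae_ae_of_ae_prod (hE.and (hK2.and hφ2))] with x hx hxΩ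
  obtain ⟨z, ⟨hEz, hKz, hφz⟩, hzΩ⟩ := (hx.and_frequently (frequently_ae_mem_iff.2 hΩc)).exists
  have hsq : (φ x - φ z) ^ 2 * K (x - z) ≤ 0 := by simpa using hEz (Or.inl hxΩ)
  have h0 : (φ x - φ z) ^ 2 = 0 := le_antisymm (nonpos_of_mul_nonpos_left hsq hKz) (sq_nonneg _)
  rw [sub_eq_zero.1 (pow_eq_zero_iff two_ne_zero |>.1 h0), hφz hzΩ]

end EnergyEstimates

theorem statement4_general {n : ℕ} (hn : 1 ≤ n) (K : Ev n → ℝ) (hK : IsLevyKernel K)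
    (hKpos : ∀ᵐ y : Ev n, 0 < K y)
    (Ω : Set (Ev n)) (hΩo : IsOpen Ω) (hΩb : Bornology.IsBounded Ω)
    (f g u : Ev n → ℝ)
    (hu : IsEnergyWeakSol K Ω f g u)
    (hf_nonneg : ∀ᵐ x ∂(volume.restrict Ω), 0 ≤ f x)
    (hg_nonneg : ∀ᵐ x : Ev n, x ∉ Ω → 0 ≤ g x) :
    ∀ᵐ x : Ev n, x ∈ Ω → 0 ≤ u x := by
  obtain ⟨hKm, hK_nonneg, -, -⟩ := hK
  have hΩ := hΩo.measurableSet
  have : Nonempty (Fin n) := ⟨⟨0, hn⟩⟩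
  have hΩc : volume Ωᶜ ≠ 0 := measure_compl_ne_zero_of_isBounded volume hΩb
  obtain ⟨hφm, -, hφ0, -⟩ := isTestFn_negPart hΩ hK_nonneg hu.1 hu.2.1
    (hu.ae_nonneg_of_notMem hg_nonneg) hu.2.2.2.1
  have hE := hu.energyE_negPart_eq_zero hKm hK_nonneg hΩ hf_nonneg hg_nonneg
  filter_upwards [ae_eq_zero_of_energyE_eq_zero hKm hKpos hΩ hΩc hφm hφ0 hE] with x hx hxΩ
  exact negPart_eq_zero.1 (hx hxΩ)

/-- maximum principle.  If `K > 0` a.e., `f ≥ 0` a.e. in `Ω` and `g ≥ 0` a.e.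
in `ℝⁿ∖Ω`, then any energy weak solution `u` of `Lu = f` in `Ω`, `u = g` outside, is
nonnegative a.e. in `Ω`. -/
theorem statement4 {n : ℕ} (hn : 1 ≤ n) (K : Ev n → ℝ) (hK : IsLevyKernel K)
    (hKpos : ∀ᵐ y : Ev n, 0 < K y)
    (Ω : Set (Ev n)) (hΩo : IsOpen Ω) (hΩb : Bornology.IsBounded Ω)
    (f g u : Ev n → ℝ) (hf : MemLp f ⊤ (volume.restrict Ω)) (hg : Measurable g)
    (hu : IsEnergyWeakSol K Ω f g u)
    (hf_nonneg : ∀ᵐ x ∂(volume.restrict Ω), 0 ≤ f x)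
    (hg_nonneg : ∀ᵐ x : Ev n, x ∉ Ω → 0 ≤ g x) :
    ∀ᵐ x : Ev n, x ∈ Ω → 0 ≤ u x :=
  statement4_general hn K hK hKpos Ω hΩo hΩb f g u hu hf_nonneg hg_nonneg
end
end

section
/- Let K be a Lévy kernel on ℝⁿ with K(y) > 0 for almost every y, let Ω ⊂ ℝⁿ be a bounded open set, f₁, f₂ ∈ L^∞(Ω), and let g₁, g₂ be measurable functions on ℝⁿ∖Ω. Let u₁ be an energy weak solution of Lu₁ = f₁ in Ω with u₁ = g₁ in ℝⁿ∖Ω, and let u₂ be an energy weak solution of Lu₂ = f₂ in Ω with u₂ = g₂ in ℝⁿ∖Ω. If f₁ ≥ f₂ almost everywhere in Ω and g₁ ≥ g₂ almost everywhere in ℝⁿ∖Ω, then u₁ ≥ u₂ almost everywhere in Ω. -/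
open MeasureTheory Metric Set
open scoped ENNReal

noncomputable section

/-!
Let `w = u₂ - u₁` and `p = w⁺`. Since `g₂ ≤ g₁` outside `Ω`, `p` is a test function, and
subtracting the two weak formulations tested against `p` gives
`(1/2) ∬ (w(x) - w(z)) (p(x) - p(z)) K(x - z) = ∫_Ω (f₂ - f₁) p ≤ 0`.
Pointwise `(p(x) - p(z))² ≤ (w(x) - w(z)) (p(x) - p(z))`, so the energy density of `p`
vanishes a.e. As `K > 0` a.e., `p(x) = p(z)` for a.e. `(x, z) ∈ Ω × Ωᶜ`; and `p = 0` on `Ωᶜ`,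
which has positive measure because `Ω` is bounded. Hence `p = 0` a.e. in `Ω`.
-/

lemma sq_posPart_sub_posPart_le_sq_sub (a b : ℝ) : (a⁺ - b⁺) ^ 2 ≤ (a - b) ^ 2 :=
  sq_le_sq.2 (abs_max_sub_max_le_abs a b 0)

lemma sq_posPart_sub_posPart_le_mul (a b : ℝ) : (a⁺ - b⁺) ^ 2 ≤ (a - b) * (a⁺ - b⁺) := by
  rcases le_total a 0 with ha | ha <;> rcases le_total b 0 with hb | hb <;>
    simp only [posPart_eq_zero.2, posPart_eq_self.2, ha, hb] <;> nlinarith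

lemma abs_mul_mul_le_sq_mul_add_sq_mul (a b k : ℝ) (hk : 0 ≤ k) :
    |a * b * k| ≤ a ^ 2 * k + b ^ 2 * k := by
  rw [abs_mul, abs_of_nonneg hk, ← add_mul]
  refine mul_le_mul_of_nonneg_right ?_ hk
  nlinarith [abs_mul_abs_self a, abs_mul_abs_self b, abs_mul a b, sq_nonneg (|a| - |b|),
    abs_nonneg a, abs_nonneg b]

lemma MeasureTheory.MemLp.of_restrict_of_ae_eq_zero_off {α E : Type*} [MeasurableSpace α]
    [NormedAddCommGroup E] {μ : Measure α} {s : Set α} {f : α → E} {q : ℝ≥0∞}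
    (hs : MeasurableSet s) (hf : MemLp f q (μ.restrict s)) (h0 : ∀ᵐ x ∂μ, x ∉ s → f x = 0) :
    MemLp f q μ :=
  ((memLp_indicator_iff_restrict hs).2 hf).ae_eq <|
    indicator_ae_eq_of_restrict_compl_ae_eq_zero hs <| (ae_restrict_iff' hs.compl).2 h0

lemma MeasureTheory.ae_eq_zero_of_ae_prod_eq {α β : Type*} [MeasurableSpace α] [MeasurableSpace β]
    {μ : Measure α} {ν : Measure β} [SFinite ν] {φ : α → ℝ} {ψ : β → ℝ}
    (h : ∀ᵐ q ∂μ.prod ν, φ q.1 = ψ q.2) (hψ : ∀ᵐ z ∂ν, ψ z = 0) (hν : ν ≠ 0) :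
    ∀ᵐ x ∂μ, φ x = 0 := by
  have : (ae ν).NeBot := ae_neBot.2 hν
  filter_upwards [Measure.ae_ae_of_ae_prod h] with x hx
  exact Filter.eventually_const.1 <| (hx.and hψ).mono fun z hz => hz.1.trans hz.2

lemma Bornology.IsBounded.measure_compl_pos {E : Type*} [NormedAddCommGroup E]
    [NormedSpace ℝ E] [FiniteDimensional ℝ E] [Nontrivial E] [MeasurableSpace E] [BorelSpace E]
    (μ : Measure E) [μ.IsAddHaarMeasure] {s : Set E} (hs : Bornology.IsBounded s) :
    0 < μ sᶜ := by
  refine pos_iff_ne_zero.2 fun h => (hs.measure_lt_top (μ := μ)).ne ?_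
  rw [← measure_univ_of_isAddLeftInvariant μ, ← Set.union_compl_self s]
  exact le_antisymm (measure_mono Set.subset_union_left)
    ((measure_union_le _ _).trans (by rw [h, add_zero]))

def kernelPairing {n : ℕ} (K : Ev n → ℝ) (u φ : Ev n → ℝ) (q : Ev n × Ev n) : ℝ :=
  (u q.1 - u q.2) * (φ q.1 - φ q.2) * K (q.1 - q.2)

section KernelPairing

variable {n : ℕ} {K : Ev n → ℝ} {Ω : Set (Ev n)} {u v w φ : Ev n → ℝ}

lemma kernelPairing_self (u : Ev n → ℝ) (q : Ev n × Ev n) :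
    kernelPairing K u u q = (u q.1 - u q.2) ^ 2 * K (q.1 - q.2) := by
  rw [kernelPairing, sq]

lemma kernelPairing_sub_left (u v φ : Ev n → ℝ) :
    kernelPairing K (u - v) φ = kernelPairing K u φ - kernelPairing K v φ := by
  ext q
  simp only [kernelPairing, Pi.sub_apply]
  ring

lemma kernelPairing_sub_right (u φ ψ : Ev n → ℝ) :
    kernelPairing K u (φ - ψ) = kernelPairing K u φ - kernelPairing K u ψ := by
  ext q
  simp only [kernelPairing, Pi.sub_apply]
  ring

lemma measurable_kernelPairing (hK : Measurable K) (hu : Measurable u) (hφ : Measurable φ) :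
    Measurable (kernelPairing K u φ) := by
  unfold kernelPairing
  fun_prop

lemma energyE_lt_top_iff_integrable (hK : Measurable K) (hK₀ : ∀ y, 0 ≤ K y)
    (hu : Measurable u) :
    energyE K Ω u < ⊤ ↔
      Integrable (kernelPairing K u u) (volume.restrict (crossRegion Ω)) := by
  rw [Integrable, hasFiniteIntegral_iff_ofReal (ae_of_all _ fun q => ?_)]
  · simp only [energyE, kernelPairing_self,
      (measurable_kernelPairing hK hu hu).aestronglyMeasurable, true_and]
  · rw [Pi.zero_apply, kernelPairing_self]
    exact mul_nonneg (sq_nonneg _) (hK₀ _)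

lemma energyE_le_of_sq_sub_le (hK₀ : ∀ y, 0 ≤ K y)
    (h : ∀ x z, (φ x - φ z) ^ 2 ≤ (u x - u z) ^ 2) : energyE K Ω φ ≤ energyE K Ω u :=
  lintegral_mono fun _ => ENNReal.ofReal_le_ofReal <| mul_le_mul_of_nonneg_right (h _ _) (hK₀ _)

lemma integrable_kernelPairing (hK : Measurable K) (hK₀ : ∀ y, 0 ≤ K y)
    (hu : Measurable u) (hφ : Measurable φ) (hEu : energyE K Ω u < ⊤)
    (hEφ : energyE K Ω φ < ⊤) :
    Integrable (kernelPairing K u φ) (volume.restrict (crossRegion Ω)) := by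
  refine (((energyE_lt_top_iff_integrable hK hK₀ hu).1 hEu).add
    ((energyE_lt_top_iff_integrable hK hK₀ hφ).1 hEφ)).mono'
    (measurable_kernelPairing hK hu hφ).aestronglyMeasurable (ae_of_all _ fun q => ?_)
  simp only [Real.norm_eq_abs, Pi.add_apply, kernelPairing_self]
  exact abs_mul_mul_le_sq_mul_add_sq_mul _ _ _ (hK₀ _)

lemma energyE_sub_lt_top (hK : Measurable K) (hK₀ : ∀ y, 0 ≤ K y)
    (hu : Measurable u) (hv : Measurable v) (hEu : energyE K Ω u < ⊤)
    (hEv : energyE K Ω v < ⊤) : energyE K Ω (u - v) < ⊤ := by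
  have pairing {φ ψ} (hφ : Measurable φ) (hψ : Measurable ψ) (hEφ : energyE K Ω φ < ⊤)
      (hEψ : energyE K Ω ψ < ⊤) := integrable_kernelPairing (Ω := Ω) hK hK₀ hφ hψ hEφ hEψ
  rw [energyE_lt_top_iff_integrable hK hK₀ (hu.sub hv), kernelPairing_sub_left,
    kernelPairing_sub_right, kernelPairing_sub_right]
  exact ((pairing hu hu hEu hEu).sub (pairing hu hv hEu hEv)).sub
    ((pairing hv hu hEv hEu).sub (pairing hv hv hEv hEv))

lemma kernelPairing_posPart_self_ae_eq_zero (hK : Measurable K) (hK₀ : ∀ y, 0 ≤ K y)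
    (hw : Measurable w) (hEw : energyE K Ω w < ⊤)
    (h : ∫ q in crossRegion Ω, kernelPairing K w w⁺ q ≤ 0) :
    kernelPairing K w⁺ w⁺ =ᵐ[volume.restrict (crossRegion Ω)] 0 := by
  have hp : Measurable w⁺ := hw.sup_const 0
  have hEp : energyE K Ω w⁺ < ⊤ := (energyE_le_of_sq_sub_le hK₀ fun x z =>
    sq_posPart_sub_posPart_le_sq_sub (w x) (w z)).trans_lt hEw
  have hnonneg : 0 ≤ kernelPairing K w⁺ w⁺ := fun q => by
    rw [Pi.zero_apply, kernelPairing_self]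
    exact mul_nonneg (sq_nonneg _) (hK₀ _)
  have hle : kernelPairing K w⁺ w⁺ ≤ kernelPairing K w w⁺ := fun q => by
    rw [kernelPairing_self, kernelPairing]
    exact mul_le_mul_of_nonneg_right (sq_posPart_sub_posPart_le_mul _ _) (hK₀ _)
  have hint := (energyE_lt_top_iff_integrable hK hK₀ hp).1 hEp
  refine (integral_eq_zero_iff_of_nonneg hnonneg hint).1 (le_antisymm ?_ (integral_nonneg hnonneg))
  exact (integral_mono hint (integrable_kernelPairing hK hK₀ hw hp hEw hEp) hle).trans h

lemma ae_prod_eq_of_kernelPairing_self_ae_eq_zero (hKpos : ∀ᵐ y : Ev n, 0 < K y)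
    (h : kernelPairing K φ φ =ᵐ[volume.restrict (crossRegion Ω)] 0) :
    ∀ᵐ q ∂(volume.restrict Ω).prod (volume.restrict Ωᶜ), φ q.1 = φ q.2 := by
  rw [Measure.prod_restrict]
  have hKpos₂ : ∀ᵐ q : Ev n × Ev n, 0 < K (q.1 - q.2) :=
    (quasiMeasurePreserving_sub_of_right_invariant volume volume).ae hKpos
  filter_upwards [ae_restrict_of_ae_restrict_of_subset (fun q hq => Or.inl hq.1) h,
    ae_restrict_of_ae hKpos₂] with q hq hKq
  rw [kernelPairing_self, Pi.zero_apply, mul_eq_zero, sq_eq_zero_iff, sub_eq_zero] at hq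
  exact hq.resolve_right hKq.ne'

end KernelPairing

section WeakSolutions

variable {n : ℕ} {K : Ev n → ℝ} {Ω : Set (Ev n)} {f₁ f₂ g₁ g₂ u₁ u₂ : Ev n → ℝ}

lemma IsEnergyWeakSol.energyE_sub_lt_top (hK : Measurable K) (hK₀ : ∀ y, 0 ≤ K y)
    (hu₁ : IsEnergyWeakSol K Ω f₁ g₁ u₁) (hu₂ : IsEnergyWeakSol K Ω f₂ g₂ u₂) :
    energyE K Ω (u₂ - u₁) < ⊤ :=
  _root_.energyE_sub_lt_top hK hK₀ hu₂.1 hu₁.1 hu₂.2.2.2.1 hu₁.2.2.2.1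

lemma isTestFn_posPart_sub (hK : Measurable K) (hK₀ : ∀ y, 0 ≤ K y) (hΩ : MeasurableSet Ω)
    (hu₁ : IsEnergyWeakSol K Ω f₁ g₁ u₁) (hu₂ : IsEnergyWeakSol K Ω f₂ g₂ u₂)
    (hg : ∀ᵐ x : Ev n, x ∉ Ω → g₂ x ≤ g₁ x) : IsTestFn K Ω (u₂ - u₁)⁺ := by
  have hE := hu₁.energyE_sub_lt_top hK hK₀ hu₂
  obtain ⟨hu₁m, hu₁L2, hu₁g, -, -⟩ := hu₁
  obtain ⟨hu₂m, hu₂L2, hu₂g, -, -⟩ := hu₂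
  have hm : Measurable (u₂ - u₁)⁺ := (hu₂m.sub hu₁m).sup_const 0
  have h0 : ∀ᵐ x : Ev n, x ∉ Ω → (u₂ - u₁)⁺ x = 0 := by
    filter_upwards [hu₁g, hu₂g, hg] with x h₁ h₂ hgx hx
    rw [Pi.posPart_apply, posPart_eq_zero, Pi.sub_apply, h₁ hx, h₂ hx, sub_nonpos]
    exact hgx hx
  have hL2 : MemLp (u₂ - u₁)⁺ 2 (volume.restrict Ω) :=
    (hu₂L2.sub hu₁L2).of_le hm.aestronglyMeasurable <| ae_of_all _ fun x => by
      simp only [Pi.posPart_apply, Real.norm_eq_abs, abs_of_nonneg (posPart_nonneg _)]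
      exact sup_le (le_abs_self _) (abs_nonneg _)
  refine ⟨hm, hL2.of_restrict_of_ae_eq_zero_off hΩ h0, h0, ?_⟩
  exact (energyE_le_of_sq_sub_le hK₀ fun x z => sq_posPart_sub_posPart_le_sq_sub _ _).trans_lt hE

lemma integral_kernelPairing_sub_eq (hK : Measurable K) (hK₀ : ∀ y, 0 ≤ K y)
    (hu₁ : IsEnergyWeakSol K Ω f₁ g₁ u₁) (hu₂ : IsEnergyWeakSol K Ω f₂ g₂ u₂)
    {φ : Ev n → ℝ} (hφ : IsTestFn K Ω φ) :
    ∫ q in crossRegion Ω, kernelPairing K (u₂ - u₁) φ q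
      = 2 * ((∫ x in Ω, f₂ x * φ x) - ∫ x in Ω, f₁ x * φ x) := by
  obtain ⟨hu₁m, -, -, hu₁E, weak₁⟩ := hu₁
  obtain ⟨hu₂m, -, -, hu₂E, weak₂⟩ := hu₂
  rw [← weak₁ φ hφ, ← weak₂ φ hφ]
  obtain ⟨hφm, -, -, hφE⟩ := hφ
  rw [kernelPairing_sub_left, integral_sub' (integrable_kernelPairing hK hK₀ hu₂m hφm hu₂E hφE)
    (integrable_kernelPairing hK hK₀ hu₁m hφm hu₁E hφE)]
  unfold kernelPairing
  ring

end WeakSolutions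

theorem statement5_general {n : ℕ} (hn : 1 ≤ n) (K : Ev n → ℝ) (hK : IsLevyKernel K)
    (hKpos : ∀ᵐ y : Ev n, 0 < K y)
    (Ω : Set (Ev n)) (hΩo : IsOpen Ω) (hΩb : Bornology.IsBounded Ω)
    (f₁ f₂ g₁ g₂ u₁ u₂ : Ev n → ℝ)
    (hf₁ : MemLp f₁ ⊤ (volume.restrict Ω)) (hf₂ : MemLp f₂ ⊤ (volume.restrict Ω))
    (hu₁ : IsEnergyWeakSol K Ω f₁ g₁ u₁) (hu₂ : IsEnergyWeakSol K Ω f₂ g₂ u₂)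
    (hf_le : ∀ᵐ x ∂(volume.restrict Ω), f₂ x ≤ f₁ x)
    (hg_le : ∀ᵐ x : Ev n, x ∉ Ω → g₂ x ≤ g₁ x) :
    ∀ᵐ x : Ev n, x ∈ Ω → u₂ x ≤ u₁ x := by
  obtain ⟨hKm, hK₀, -, -⟩ := hK
  have hΩ : MeasurableSet Ω := hΩo.measurableSet
  have : IsFiniteMeasure (volume.restrict Ω) := isFiniteMeasure_restrict.2 hΩb.measure_lt_top.ne
  have : Nonempty (Fin n) := ⟨⟨0, hn⟩⟩
  set p := (u₂ - u₁)⁺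
  have hp : IsTestFn K Ω p := isTestFn_posPart_sub hKm hK₀ hΩ hu₁ hu₂ hg_le
  have hpΩ : Integrable p (volume.restrict Ω) := (hp.2.1.restrict Ω).integrable one_le_two
  have hfp : ∫ x in Ω, f₂ x * p x ≤ ∫ x in Ω, f₁ x * p x :=
    integral_mono_ae (hpΩ.mul_of_top_right hf₂) (hpΩ.mul_of_top_right hf₁) <| by
      filter_upwards [hf_le] with x hx using mul_le_mul_of_nonneg_right hx (posPart_nonneg _)
  have hpair : ∫ q in crossRegion Ω, kernelPairing K (u₂ - u₁) p q ≤ 0 := by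
    rw [integral_kernelPairing_sub_eq hKm hK₀ hu₁ hu₂ hp]
    linarith
  have hpdiag := ae_prod_eq_of_kernelPairing_self_ae_eq_zero hKpos <|
    kernelPairing_posPart_self_ae_eq_zero hKm hK₀ (hu₂.1.sub hu₁.1)
      (hu₁.energyE_sub_lt_top hKm hK₀ hu₂) hpair
  have hp0 : ∀ᵐ x ∂volume.restrict Ω, p x = 0 :=
    ae_eq_zero_of_ae_prod_eq hpdiag ((ae_restrict_iff' hΩ.compl).2 hp.2.2.1) <| by
      simpa [Measure.restrict_eq_zero] using (hΩb.measure_compl_pos volume).ne'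
  filter_upwards [ae_imp_of_ae_restrict hp0] with x hx hxΩ
  simpa [p, sub_nonpos] using hx hxΩ

/-- comparison principle.  If `f₁ ≥ f₂` a.e. in `Ω` and `g₁ ≥ g₂` a.e. in
`ℝⁿ∖Ω`, then the corresponding energy weak solutions satisfy `u₁ ≥ u₂` a.e. in `Ω`. -/
theorem statement5 {n : ℕ} (hn : 1 ≤ n) (K : Ev n → ℝ) (hK : IsLevyKernel K)
    (hKpos : ∀ᵐ y : Ev n, 0 < K y)
    (Ω : Set (Ev n)) (hΩo : IsOpen Ω) (hΩb : Bornology.IsBounded Ω)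
    (f₁ f₂ g₁ g₂ u₁ u₂ : Ev n → ℝ)
    (hf₁ : MemLp f₁ ⊤ (volume.restrict Ω)) (hf₂ : MemLp f₂ ⊤ (volume.restrict Ω))
    (hg₁ : Measurable g₁) (hg₂ : Measurable g₂)
    (hu₁ : IsEnergyWeakSol K Ω f₁ g₁ u₁) (hu₂ : IsEnergyWeakSol K Ω f₂ g₂ u₂)
    (hf_le : ∀ᵐ x ∂(volume.restrict Ω), f₂ x ≤ f₁ x)
    (hg_le : ∀ᵐ x : Ev n, x ∉ Ω → g₂ x ≤ g₁ x) :
    ∀ᵐ x : Ev n, x ∈ Ω → u₂ x ≤ u₁ x :=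
  statement5_general hn K hK hKpos Ω hΩo hΩb f₁ f₂ g₁ g₂ u₁ u₂ hf₁ hf₂ hu₁ hu₂ hf_le hg_le
end
end
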